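/- Let A₃ be the operator A₁ specialised to μ_X = μ_Y = 0, namely A₃f(x) = s_n⁴(1−ρ²)²·x·f⁗(x) + (1−ρ²)s_n³(n s_n(1−ρ²)+4ρx)·f‴(x) + s_n²((6ρ²−2)x+3n s_n ρ(1−ρ²))·f″(x) + s_n(n s_n(3ρ²−1)−4ρx)·f′(x) + (x−n s_n ρ)·f(x), and let A₄ be the second-order operator A₄g(x) = s_n²(1−ρ²)·x·g″(x) + s_n(n s_n(1−ρ²)+2ρx)·g′(x) + (n s_n ρ−x)·g(x). Then for every function f : ℝ → ℝ of class C⁴ and every x ∈ ℝ, A₃f(x) = A₄g(x), where g(x) = (1−ρ²)s_n²·f″(x) + 2ρ s_n·f′(x) − f(x). -/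

import Mathlib

/-! `g` is a constant-coefficient combination of `f, f', f''`, so `g'` and `g''` are the same
combination of the next derivatives of `f`. Substituting them into `A₄ g` leaves a polynomial
identity in the coefficients, which says that `A₃` factors as `A₄` composed with
`f ↦ (1 - ρ²) sₙ² f'' + 2ρ sₙ f' - f`. -/

/-- The fourth-order Stein operator `A₁` specialised to `μX = μY = 0`
(with `sₙ = σXσY/n`). -/
noncomputable def A3 (n : ℕ) (σX σY ρ : ℝ) (f : ℝ → ℝ) (x : ℝ) : ℝ :=
  (σX * σY / (n : ℝ)) ^ 4 * (1 - ρ ^ 2) ^ 2 * x * iteratedDeriv 4 f x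
    + (1 - ρ ^ 2) * (σX * σY / (n : ℝ)) ^ 3
        * ((n : ℝ) * (σX * σY / (n : ℝ)) * (1 - ρ ^ 2) + 4 * ρ * x) * iteratedDeriv 3 f x
    + (σX * σY / (n : ℝ)) ^ 2
        * ((6 * ρ ^ 2 - 2) * x + 3 * (n : ℝ) * (σX * σY / (n : ℝ)) * ρ * (1 - ρ ^ 2))
        * iteratedDeriv 2 f x
    + (σX * σY / (n : ℝ))
        * ((n : ℝ) * (σX * σY / (n : ℝ)) * (3 * ρ ^ 2 - 1) - 4 * ρ * x) * iteratedDeriv 1 f x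
    + (x - (n : ℝ) * (σX * σY / (n : ℝ)) * ρ) * f x

/-- The second-order (variance-gamma) Stein operator `A₄` (with `sₙ = σXσY/n`). -/
noncomputable def A4 (n : ℕ) (σX σY ρ : ℝ) (g : ℝ → ℝ) (x : ℝ) : ℝ :=
  (σX * σY / (n : ℝ)) ^ 2 * (1 - ρ ^ 2) * x * iteratedDeriv 2 g x
    + (σX * σY / (n : ℝ))
        * ((n : ℝ) * (σX * σY / (n : ℝ)) * (1 - ρ ^ 2) + 2 * ρ * x) * iteratedDeriv 1 g x
    + ((n : ℝ) * (σX * σY / (n : ℝ)) * ρ - x) * g x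

section IteratedDeriv

variable {𝕜 F : Type*} [NontriviallyNormedField 𝕜] [NormedAddCommGroup F] [NormedSpace 𝕜 F]

theorem iteratedDeriv_iteratedDeriv (m k : ℕ) (f : 𝕜 → F) :
    iteratedDeriv m (iteratedDeriv k f) = iteratedDeriv (m + k) f := by
  simp only [iteratedDeriv_eq_iterate, Function.iterate_add_apply]

theorem ContDiff.contDiff_iteratedDeriv {m k : ℕ} {f : 𝕜 → F} (hf : ContDiff 𝕜 (m + k : ℕ) f) :
    ContDiff 𝕜 m (iteratedDeriv k f) := by
  rw [iteratedDeriv_eq_iterate]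
  exact hf.iterate_deriv' m k

theorem iteratedDeriv_const_mul_iteratedDeriv_add_sub {m : ℕ} {f : 𝕜 → 𝕜}
    (hf : ContDiff 𝕜 (m + 2 : ℕ) f) (a b : 𝕜) :
    iteratedDeriv m (fun y => a * iteratedDeriv 2 f y + b * deriv f y - f y)
      = fun y => a * iteratedDeriv (m + 2) f y + b * iteratedDeriv (m + 1) f y
          - iteratedDeriv m f y := by
  have h2 : ContDiff 𝕜 m (iteratedDeriv 2 f) := hf.contDiff_iteratedDeriv
  have h1 : ContDiff 𝕜 m (deriv f) := by
    rw [← iteratedDeriv_one]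
    exact (hf.of_le (by norm_cast; omega)).contDiff_iteratedDeriv
  have h0 : ContDiff 𝕜 m f := hf.of_le (by norm_cast; omega)
  have ha : ContDiff 𝕜 m (fun y => a * iteratedDeriv 2 f y) := contDiff_const.mul h2
  have hb : ContDiff 𝕜 m (fun y => b * deriv f y) := contDiff_const.mul h1
  funext y
  rw [iteratedDeriv_fun_sub (ha.add hb).contDiffAt h0.contDiffAt,
    iteratedDeriv_fun_add ha.contDiffAt hb.contDiffAt,
    iteratedDeriv_const_mul a h2.contDiffAt, iteratedDeriv_const_mul b h1.contDiffAt,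
    iteratedDeriv_iteratedDeriv, ← iteratedDeriv_one, iteratedDeriv_iteratedDeriv]

end IteratedDeriv

theorem A3_eq_A4_of_substitution_general
    (σX σY ρ : ℝ) (n : ℕ)
    (s : ℝ) (hs : s = σX * σY / n)
    (f : ℝ → ℝ) (hf : ContDiff ℝ 4 f) (x : ℝ) :
    A3 n σX σY ρ f x
      = A4 n σX σY ρ
          (fun y => (1 - ρ ^ 2) * s ^ 2 * iteratedDeriv 2 f y + 2 * ρ * s * deriv f y - f y)
          x := by
  subst hs
  rw [A4, iteratedDeriv_const_mul_iteratedDeriv_add_sub (m := 2) hf,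
    iteratedDeriv_const_mul_iteratedDeriv_add_sub (m := 1) (hf.of_le (by norm_num))]
  simp only [A3, iteratedDeriv_one]
  ring

/-- The fourth-order Stein operator `A₃` (i.e. `A₁` specialised to `μX = μY = 0`) applied to a
`C⁴` function `f` coincides with the second-order Stein operator `A₄` applied to
`g = (1 - ρ²) sₙ² f'' + 2ρ sₙ f' - f`, where `sₙ = σXσY/n`. -/
theorem A3_eq_A4_of_substitution
    (σX σY ρ : ℝ) (hσX : 0 < σX) (hσY : 0 < σY)
    (hρ₁ : -1 < ρ) (hρ₂ : ρ < 1) (n : ℕ) (hn : 1 ≤ n)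
    (s : ℝ) (hs : s = σX * σY / n)
    (f : ℝ → ℝ) (hf : ContDiff ℝ 4 f) (x : ℝ) :
    A3 n σX σY ρ f x
      = A4 n σX σY ρ
          (fun y => (1 - ρ ^ 2) * s ^ 2 * iteratedDeriv 2 f y + 2 * ρ * s * deriv f y - f y)
          x :=
  A3_eq_A4_of_substitution_general σX σY ρ n s hs f hf x
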